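/- arXiv:1607.06540 — 6 statements merged into one kernel-verified Lean document; each statement's English description precedes it below -/
import Mathlib

section
/- Let R be a symmetric real K×K matrix and let z : Fin K → ℝ satisfy z_k > 0 for all k. Then Σ_{k=1}^{K} Σ_{j=1}^{K} (z_j / z_k) · R_{kj}² ≥ Σ_{k=1}^{K} Σ_{j=1}^{K} R_{kj}², i.e., trace((diagonal z)⁻¹ · R · (diagonal z) · R) ≥ trace(R · R). -/
/-!
Pairing the `(k, j)` and `(j, k)` terms, which carry the same `R k j ^ 2` by symmetry, gives the
weight `z j / z k + z k / z j ≥ 2`, so twice the weighted sum dominates twice the plain sum.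
-/

open Matrix Finset

section Inequality

variable {𝕜 : Type*} [Field 𝕜] [LinearOrder 𝕜] [IsStrictOrderedRing 𝕜]

theorem two_le_div_add_div {a b : 𝕜} (ha : 0 < a) (hb : 0 < b) : 2 ≤ a / b + b / a := by
  rw [div_add_div _ _ hb.ne' ha.ne', le_div_iff₀ (mul_pos hb ha)]
  nlinarith [sq_nonneg (a - b)]

variable {ι : Type*} [Fintype ι]

theorem sum_sum_sq_le_sum_sum_div_mul_sq {R : Matrix ι ι 𝕜} (hR : R.IsSymm) {z : ι → 𝕜}
    (hz : ∀ k, 0 < z k) :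
    ∑ k, ∑ j, R k j ^ 2 ≤ ∑ k, ∑ j, z j / z k * R k j ^ 2 := by
  have hswap : ∑ k, ∑ j, z j / z k * R k j ^ 2 = ∑ k, ∑ j, z k / z j * R k j ^ 2 := by
    rw [sum_comm]
    simp_rw [hR.apply]
  have hpaired : 2 * ∑ k, ∑ j, z j / z k * R k j ^ 2 =
      ∑ k, ∑ j, (z j / z k + z k / z j) * R k j ^ 2 := by
    rw [two_mul]
    nth_rw 2 [hswap]
    simp only [← sum_add_distrib, add_mul]
  suffices 2 * ∑ k, ∑ j, R k j ^ 2 ≤ 2 * ∑ k, ∑ j, z j / z k * R k j ^ 2 by linarith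
  simp_rw [hpaired, mul_sum]
  gcongr with k _ j _
  exact two_le_div_add_div (hz j) (hz k)

end Inequality

namespace Matrix

variable {ι 𝕜 : Type*} [Fintype ι]

theorem inv_diagonal_of_ne_zero [DecidableEq ι] [Field 𝕜] {z : ι → 𝕜} (hz : ∀ k, z k ≠ 0) :
    (diagonal z)⁻¹ = diagonal z⁻¹ :=
  inv_eq_right_inv (by simp [hz])

theorem trace_mul_self_of_isSymm [CommSemiring 𝕜] {R : Matrix ι ι 𝕜} (hR : R.IsSymm) :
    (R * R).trace = ∑ k, ∑ j, R k j ^ 2 := by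
  simp only [trace, diag, mul_apply, sq]
  simp_rw [hR.apply]

theorem trace_diagonal_mul_mul_diagonal_mul [DecidableEq ι] [CommSemiring 𝕜] (w z : ι → 𝕜)
    (A B : Matrix ι ι 𝕜) :
    (diagonal w * A * diagonal z * B).trace = ∑ k, ∑ j, w k * A k j * z j * B j k := by
  simp only [trace, diag, mul_apply (M := _ * diagonal z), mul_diagonal, diagonal_mul]

end Matrix

/-- For a symmetric real `K×K` matrix `R` and positive weights `z`,
`∑ k ∑ j (z j / z k) * R k j ² ≥ ∑ k ∑ j R k j ²`, i.e.
`trace (Z⁻¹ * R * Z * R) ≥ trace (R * R)` where `Z = diagonal z`. -/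
theorem weighted_squared_sum_ge (K : ℕ) (R : Matrix (Fin K) (Fin K) ℝ) (hR : Rᵀ = R)
    (z : Fin K → ℝ) (hz : ∀ k, 0 < z k) :
    (∑ k : Fin K, ∑ j : Fin K, R k j ^ 2 ≤
      ∑ k : Fin K, ∑ j : Fin K, (z j / z k) * R k j ^ 2) ∧
    (R * R).trace ≤ ((Matrix.diagonal z)⁻¹ * R * Matrix.diagonal z * R).trace := by
  have hsum := sum_sum_sq_le_sum_sum_div_mul_sq hR hz
  refine ⟨hsum, ?_⟩
  have hweighted : ((diagonal z)⁻¹ * R * diagonal z * R).trace =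
      ∑ k, ∑ j, z j / z k * R k j ^ 2 := by
    rw [inv_diagonal_of_ne_zero fun k => (hz k).ne', trace_diagonal_mul_mul_diagonal_mul]
    simp_rw [IsSymm.apply hR]
    congr! 2 with k _ j _
    simp only [Pi.inv_apply]
    ring
  rw [trace_mul_self_of_isSymm hR, hweighted]
  exact hsum
end

section
/- Let q_1, …, q_K ∈ ℝ^τ be unit-norm vectors, let z : Fin K → ℝ satisfy z_k > 0 for all k, define s_k = Σ_{j=1}^{K} z_j ⟨q_k, q_j⟩², and suppose s_k > z_k for all k. Let γ : Fin K → ℝ with γ_k > 0, and suppose the asymptotic SINR lower bound φ̄_k = z_k/(s_k − z_k) satisfies φ̄_k ≥ γ_k for every k. Then (K : ℝ)² ≤ τ · Σ_{k=1}^{K} (1 + γ_k)/γ_k. -/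
/-!
Write `ρ k j = ⟪q k, q j⟫`. Each requirement `γ k ≤ z k / (s k - z k)` rearranges to
`s k / z k ≤ (1 + γ k) / γ k`. Since `ρ` is symmetric, pairing the terms `(k, j)` and `(j, k)`
of `∑ k, s k / z k = ∑ k j, (z j / z k) ρ k j ^ 2` and using `z j / z k + z k / z j ≥ 2` shows
that this sum is at least `∑ k j, ρ k j ^ 2`. Finally the Welch bound
`(∑ k, ‖q k‖ ^ 2) ^ 2 ≤ τ ∑ k j, ρ k j ^ 2` follows from Cauchy–Schwarz applied to the diagonal of
the `τ × τ` frame matrix `A Aᵀ`, where the columns of `A` are the coordinates of the `q k`: its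
squared Frobenius norm equals that of the Gram matrix `Aᵀ A`, by cyclicity of the trace.
-/

open Finset Module

open scoped RealInnerProductSpace

namespace Matrix

variable {m n R : Type*} [Fintype m] [Fintype n]

lemma trace_mul_transpose_eq_sum_sq [CommSemiring R] (M : Matrix m n R) :
    trace (M * Mᵀ) = ∑ i, ∑ j, M i j ^ 2 := by
  simp only [trace, diag_apply, mul_apply, transpose_apply, sq]

lemma sum_sq_transpose_mul_self_eq [CommSemiring R] (A : Matrix m n R) :
    ∑ i, ∑ j, (Aᵀ * A) i j ^ 2 = ∑ i, ∑ j, (A * Aᵀ) i j ^ 2 := by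
  simp only [← trace_mul_transpose_eq_sum_sq, transpose_mul, transpose_transpose]
  rw [Matrix.mul_assoc, trace_mul_comm]
  simp only [Matrix.mul_assoc]

variable [CommRing R] [LinearOrder R] [IsStrictOrderedRing R]

lemma sq_trace_le_card_mul_sum_sq (M : Matrix n n R) :
    trace M ^ 2 ≤ Fintype.card n * ∑ i, ∑ j, M i j ^ 2 :=
  calc trace M ^ 2 ≤ Fintype.card n * ∑ i, M i i ^ 2 := sq_sum_le_card_mul_sum_sq
    _ ≤ Fintype.card n * ∑ i, ∑ j, M i j ^ 2 := by
      gcongr with i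
      exact single_le_sum (fun j _ ↦ sq_nonneg (M i j)) (mem_univ i)

lemma sq_trace_transpose_mul_self_le (A : Matrix m n R) :
    trace (Aᵀ * A) ^ 2 ≤ Fintype.card m * ∑ i, ∑ j, (Aᵀ * A) i j ^ 2 := by
  rw [trace_mul_comm, sum_sq_transpose_mul_self_eq]
  exact sq_trace_le_card_mul_sum_sq _

end Matrix

theorem sq_sum_norm_sq_le_finrank_mul_sum_inner_sq {E ι : Type*} [NormedAddCommGroup E]
    [InnerProductSpace ℝ E] [FiniteDimensional ℝ E] [Fintype ι] (v : ι → E) :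
    (∑ k, ‖v k‖ ^ 2) ^ 2 ≤ finrank ℝ E * ∑ k, ∑ j, ⟪v k, v j⟫ ^ 2 := by
  have hgram := Matrix.gram_eq_conjTranspose_mul (stdOrthonormalBasis ℝ E) v
  rw [Matrix.conjTranspose_eq_transpose_of_trivial] at hgram
  have hbound := Matrix.sq_trace_transpose_mul_self_le
    (Matrix.of fun i j ↦ (stdOrthonormalBasis ℝ E).repr (v j) i)
  rw [← hgram, Fintype.card_fin] at hbound
  simpa [Matrix.trace, Matrix.gram_apply, real_inner_self_eq_norm_sq] using hbound

lemma sum_sum_le_sum_sum_mul_div {ι : Type*} [Fintype ι] {w : ι → ι → ℝ}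
    (hw : ∀ k j, w k j = w j k) (hw₀ : ∀ k j, 0 ≤ w k j) {z : ι → ℝ} (hz : ∀ k, 0 < z k) :
    ∑ k, ∑ j, w k j ≤ ∑ k, (∑ j, z j * w k j) / z k := by
  have hswap : ∑ k, ∑ j, z k / z j * w k j = ∑ k, ∑ j, z j / z k * w k j := by
    rw [sum_comm]
    simp only [hw]
  have hamgm : ∀ k j, 2 * w k j ≤ (z j / z k + z k / z j) * w k j := fun k j ↦ by
    have h₁ := hz k
    have h₂ := hz j
    have : 2 ≤ z j / z k + z k / z j := by
      rw [div_add_div _ _ h₁.ne' h₂.ne', le_div_iff₀ (by positivity)]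
      nlinarith [sq_nonneg (z j - z k)]
    exact mul_le_mul_of_nonneg_right this (hw₀ k j)
  have hsum := sum_le_sum fun k (_ : k ∈ univ) ↦ sum_le_sum fun j (_ : j ∈ univ) ↦ hamgm k j
  simp only [add_mul, sum_add_distrib, hswap, ← mul_sum] at hsum
  simp only [sum_div, mul_div_right_comm (z _)]
  linarith

lemma div_le_one_add_div_self_of_le_div_sub {s z γ : ℝ} (hz : 0 < z) (hγ : 0 < γ)
    (h : γ ≤ z / (s - z)) : s / z ≤ (1 + γ) / γ := by
  have hsz : 0 < s - z :=
    ((div_pos_iff.mp (hγ.trans_le h)).resolve_right fun h' ↦ h'.1.not_gt hz).2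
  rw [le_div_iff₀ hsz] at h
  rw [div_le_div_iff₀ hz hγ]
  linarith

theorem user_load_upper_bound_general (K τ : ℕ)
    (q : Fin K → EuclideanSpace ℝ (Fin τ)) (hq : ∀ k, ‖q k‖ = 1)
    (z : Fin K → ℝ) (hz : ∀ k, 0 < z k)
    (s : Fin K → ℝ) (hs : ∀ k, s k = ∑ j : Fin K, z j * (inner ℝ (q k) (q j) : ℝ) ^ 2)
    (γ : Fin K → ℝ) (hγ : ∀ k, 0 < γ k)
    (hreq : ∀ k, γ k ≤ z k / (s k - z k)) :
    (K : ℝ) ^ 2 ≤ (τ : ℝ) * ∑ k : Fin K, (1 + γ k) / γ k :=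
  calc (K : ℝ) ^ 2 = (∑ k, ‖q k‖ ^ 2) ^ 2 := by simp [hq]
    _ ≤ τ * ∑ k, ∑ j, ⟪q k, q j⟫ ^ 2 := by
      simpa using sq_sum_norm_sq_le_finrank_mul_sum_inner_sq q
    _ ≤ τ * ∑ k, s k / z k := by
      simp only [hs]
      gcongr τ * ?_
      exact sum_sum_le_sum_sum_mul_div (fun k j ↦ by rw [real_inner_comm])
        (fun _ _ ↦ sq_nonneg _) hz
    _ ≤ τ * ∑ k, (1 + γ k) / γ k := by
      gcongr τ * ∑ k, ?_ with k
      exact div_le_one_add_div_self_of_le_div_sub (hz k) (hγ k) (hreq k)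

/-- **User load upper bound (eq. (14)).** For unit-norm pilot sequences `q k ∈ ℝ^τ`,
positive normalized powers `z`, `s k = ∑ j z j ⟪q k, q j⟫²` with `s k > z k`, and positive
SINR requirements `γ` satisfied by the asymptotic SINR lower bounds
`φ̄ k = z k / (s k − z k) ≥ γ k`, the number of users obeys
`K² ≤ τ · ∑ k (1 + γ k)/γ k`. -/
theorem user_load_upper_bound (K τ : ℕ)
    (q : Fin K → EuclideanSpace ℝ (Fin τ)) (hq : ∀ k, ‖q k‖ = 1)
    (z : Fin K → ℝ) (hz : ∀ k, 0 < z k)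
    (s : Fin K → ℝ) (hs : ∀ k, s k = ∑ j : Fin K, z j * (inner ℝ (q k) (q j) : ℝ) ^ 2)
    (hsz : ∀ k, z k < s k)
    (γ : Fin K → ℝ) (hγ : ∀ k, 0 < γ k)
    (hreq : ∀ k, γ k ≤ z k / (s k - z k)) :
    (K : ℝ) ^ 2 ≤ (τ : ℝ) * ∑ k : Fin K, (1 + γ k) / γ k :=
  user_load_upper_bound_general K τ q hq z hz s hs γ hγ hreq
end

section
/- Let x, z : Fin K → ℝ both be antitone, and suppose x majorizes z, i.e., Σ_{n < m} z_n ≤ Σ_{n < m} x_n for every m ≤ K with Σ_{n < K} z_n = Σ_{n < K} x_n. Then there exists a list of at most K − 1 real K×K matrices T_1, …, T_r (r ≤ K − 1), each of the form T = t • 1 + (1 − t) • P where t ∈ [0,1] and P is the permutation matrix of a transposition of two indices, such that (T_r ⬝ ⋯ ⬝ T_1).mulVec x = z. -/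
/-!
Let `l` be the first index with `x l < z l` and `i < l` an index with `z i < x i`; one exists
because the prefix sums of `x` up to `l` exceed those of `z`. Since `z` is antitone,
`x l < z l ≤ z i < x i`, so a T-transform on `{i, l}` can move `δ = min (x i - z i) (z l - x l)`
from `x i` to `x l`. All prefix sums of `x - z` ending between `i` and `l` are at least
`x i - z i`, so majorization is preserved, and one more coordinate now agrees with `z`. The
last transform settles two coordinates at once, since `x` and `z` never differ in exactly one
coordinate, giving at most `K - 1` transforms.
-/

open Finset Matrix

section

variable {ι : Type*} [Fintype ι] [DecidableEq ι]

def IsTTransform (T : Matrix ι ι ℝ) : Prop :=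
  ∃ (t : ℝ) (i j : ι), 0 ≤ t ∧ t ≤ 1 ∧ i ≠ j ∧
    T = t • (1 : Matrix ι ι ℝ) + (1 - t) • (Equiv.swap i j).permMatrix ℝ

theorem exists_isTTransform_mulVec_eq {x : ι → ℝ} {i j : ι} (hij : i ≠ j) {δ : ℝ}
    (hδ : 0 ≤ δ) (hδx : δ ≤ x i - x j) :
    ∃ T, IsTTransform T ∧ T *ᵥ x = x - Pi.single i δ + Pi.single j δ := by
  -- If `x i = x j` then `δ = 0`, and `t = 1` because `0 / 0 = 0`.
  set t := 1 - δ / (x i - x j)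
  have hmove : (1 - t) * (x i - x j) = δ := by
    rw [sub_sub_cancel]
    exact div_mul_cancel_of_imp fun h => by linarith
  refine ⟨_, ⟨t, i, j, ?_, ?_, hij, rfl⟩, ?_⟩
  · have : δ / (x i - x j) ≤ 1 := div_le_one_of_le₀ hδx (hδ.trans hδx)
    linarith
  · have : 0 ≤ δ / (x i - x j) := div_nonneg hδ (hδ.trans hδx)
    linarith
  · ext k
    simp only [add_mulVec, smul_mulVec, one_mulVec, permMatrix_mulVec, Pi.add_apply,
      Pi.sub_apply, Pi.smul_apply, Function.comp_apply, smul_eq_mul, Pi.single_apply]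
    by_cases hki : k = i
    · subst hki
      simp only [Equiv.swap_apply_left, if_true, if_neg hij]
      linear_combination -hmove
    by_cases hkj : k = j
    · subst hkj
      simp only [Equiv.swap_apply_right, if_true, if_neg hki]
      linear_combination hmove
    · simp only [Equiv.swap_apply_of_ne_of_ne hki hkj, if_neg hki, if_neg hkj]
      ring

theorem two_le_card_ne_of_sum_eq {x z : ι → ℝ} (hsum : ∑ n, z n = ∑ n, x n)
    (hxz : x ≠ z) :
    2 ≤ #{n | x n ≠ z n} := by
  obtain ⟨i, hi⟩ := Function.ne_iff.mp hxz
  refine one_lt_card.mpr ⟨i, by simpa using hi, ?_⟩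
  by_contra! hrest
  have hsingle : ∀ n ≠ i, x n - z n = 0 := fun n hn =>
    sub_eq_zero.mpr (not_not.mp fun h => hn (hrest n (by simpa using h)).symm)
  have := Fintype.sum_eq_single i hsingle
  rw [sum_sub_distrib, hsum, sub_self] at this
  exact hi (sub_eq_zero.mp this.symm)

end

section Majorization

variable {K : ℕ}

def prefixSum (x : Fin K → ℝ) (m : ℕ) : ℝ :=
  ∑ n ∈ univ.filter (fun n : Fin K => (n : ℕ) < m), x n

def Majorizes (x z : Fin K → ℝ) : Prop :=
  (∀ m ≤ K, prefixSum z m ≤ prefixSum x m) ∧ ∑ n, z n = ∑ n, x n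

theorem prefixSum_succ (x : Fin K → ℝ) (l : Fin K) :
    prefixSum x (l + 1) = prefixSum x l + x l := by
  have : univ.filter (fun n : Fin K => (n : ℕ) < l + 1) =
      insert l (univ.filter (fun n : Fin K => (n : ℕ) < l)) := by
    ext n
    simp only [mem_filter, mem_insert, mem_univ, true_and, Fin.ext_iff]
    omega
  rw [prefixSum, this, sum_insert (by simp), add_comm, prefixSum]

theorem prefixSum_sub_single_add_single (x : Fin K → ℝ) (i j : Fin K) (δ : ℝ) (m : ℕ) :
    prefixSum (x - Pi.single i δ + Pi.single j δ) m =
      prefixSum x m - (if (i : ℕ) < m then δ else 0) + (if (j : ℕ) < m then δ else 0) := by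
  simp only [prefixSum, Pi.add_apply, Pi.sub_apply, sum_add_distrib, sum_sub_distrib,
    sum_pi_single', mem_filter, mem_univ, true_and]

variable {x z : Fin K → ℝ}

theorem Majorizes.exists_transfer_pair (h : Majorizes x z) (hxz : x ≠ z) :
    ∃ i l : Fin K, i < l ∧ z i < x i ∧ x l < z l ∧ ∀ n < l, z n ≤ x n := by
  have hdeficit : ∃ l, x l < z l := by
    by_contra! hle
    have hagree := (sum_eq_sum_iff_of_le fun n _ => hle n).mp h.2
    exact hxz (funext fun n => (hagree n (mem_univ n)).symm)
  obtain ⟨l, hl⟩ := exists_minimal_of_wellFoundedLT _ hdeficit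
  have hbefore : ∀ n < l, z n ≤ x n := fun n hn => not_lt.mp (hl.not_prop_of_lt hn)
  have hsurplus : prefixSum z l < prefixSum x l := by
    have := h.1 (l + 1) l.isLt
    rw [prefixSum_succ, prefixSum_succ] at this
    linarith [hl.prop]
  obtain ⟨i, hi, hzx⟩ := exists_lt_of_sum_lt hsurplus
  have hil : i < l := by simpa using hi
  exact ⟨i, l, hil, hzx, hl.prop, hbefore⟩

theorem Majorizes.sub_single_add_single (h : Majorizes x z) {i l : Fin K} (hil : i < l)
    (hbefore : ∀ n < l, z n ≤ x n) {δ : ℝ} (hδi : δ ≤ x i - z i) :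
    Majorizes (x - Pi.single i δ + Pi.single l δ) z := by
  refine ⟨fun m hm => ?_, ?_⟩
  · rw [prefixSum_sub_single_add_single]
    have hprefix := h.1 m hm
    by_cases him : (i : ℕ) < m
    · by_cases hlm : (l : ℕ) < m
      · simp only [if_pos him, if_pos hlm]
        linarith
      · have hgap : x i - z i ≤ prefixSum x m - prefixSum z m := by
          rw [prefixSum, prefixSum, ← sum_sub_distrib]
          refine single_le_sum (fun n hn => sub_nonneg.mpr (hbefore n ?_)) (by simpa using him)
          rw [mem_filter] at hn
          exact Fin.lt_def.mpr (by omega)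
        simp only [if_pos him, if_neg hlm]
        linarith
    · have hlm : ¬ (l : ℕ) < m := by
        have := Fin.lt_def.mp hil
        omega
      simp only [if_neg him, if_neg hlm]
      linarith
  · simp only [Pi.add_apply, Pi.sub_apply, sum_add_distrib, sum_sub_distrib,
      Fintype.sum_pi_single', h.2]
    ring

theorem Majorizes.exists_isTTransform_card_ne_lt (hz : Antitone z) (h : Majorizes x z)
    (hxz : x ≠ z) :
    ∃ T : Matrix (Fin K) (Fin K) ℝ, IsTTransform T ∧ Majorizes (T *ᵥ x) z ∧
      #{n | (T *ᵥ x) n ≠ z n} < #{n | x n ≠ z n} := by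
  obtain ⟨i, l, hil, hi, hl, hbefore⟩ := h.exists_transfer_pair hxz
  set δ := min (x i - z i) (z l - x l) with hδdef
  have hδ : 0 ≤ δ := le_min (by linarith) (by linarith)
  have hδx : δ ≤ x i - x l := by linarith [min_le_left (x i - z i) (z l - x l), hz hil.le]
  obtain ⟨T, hT, hTx⟩ := exists_isTTransform_mulVec_eq hil.ne hδ hδx
  refine ⟨T, hT, hTx ▸ h.sub_single_add_single hil hbefore (min_le_left _ _), ?_⟩
  rw [hTx]
  set y := x - Pi.single i δ + Pi.single l δ
  have hyi : y i = x i - δ := by simp [y, hil.ne']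
  have hyl : y l = x l + δ := by simp [y, hil.ne']
  have hyn : ∀ n, n ≠ i → n ≠ l → y n = x n := fun n hni hnl => by simp [y, hni, hnl]
  -- `δ` is the smaller of the two gaps, so the transfer settles coordinate `i` or `l`.
  obtain ⟨w, hwx, hwy⟩ : ∃ w, x w ≠ z w ∧ y w = z w := by
    rcases le_total (x i - z i) (z l - x l) with hgap | hgap
    · exact ⟨i, hi.ne', by rw [hyi, hδdef, min_eq_left hgap]; ring⟩
    · exact ⟨l, hl.ne, by rw [hyl, hδdef, min_eq_right hgap]; ring⟩
  have hsub : ({n | y n ≠ z n} : Finset (Fin K)) ⊆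
      ({n | x n ≠ z n} : Finset (Fin K)).erase w := by
    intro n hn
    rw [mem_filter] at hn
    refine mem_erase.mpr ⟨fun hnw => hn.2 (hnw ▸ hwy), mem_filter.mpr ⟨mem_univ n, ?_⟩⟩
    by_cases hni : n = i
    · exact hni ▸ hi.ne'
    by_cases hnl : n = l
    · exact hnl ▸ hl.ne
    · exact hyn n hni hnl ▸ hn.2
  calc #{n | y n ≠ z n} ≤ #(({n | x n ≠ z n} : Finset (Fin K)).erase w) := card_le_card hsub
    _ < #{n | x n ≠ z n} := card_erase_lt_of_mem (by simpa using hwx)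

theorem Majorizes.exists_list_isTTransform (hz : Antitone z) (h : Majorizes x z) :
    ∃ Ts : List (Matrix (Fin K) (Fin K) ℝ), Ts.length ≤ #{n | x n ≠ z n} - 1 ∧
      (∀ T ∈ Ts, IsTTransform T) ∧ Ts.prod *ᵥ x = z := by
  induction hd : #{n | x n ≠ z n} using Nat.strong_induction_on generalizing x with
  | _ d ih =>
    by_cases hxz : x = z
    · exact ⟨[], by simp, by simp, by simp [hxz]⟩
    obtain ⟨T, hT, hy, hlt⟩ := h.exists_isTTransform_card_ne_lt hz hxz
    obtain ⟨Ts, hlen, hTs, hprod⟩ := ih _ (hd ▸ hlt) hy rfl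
    have htwo := hd ▸ two_le_card_ne_of_sum_eq h.2 hxz
    refine ⟨Ts ++ [T], ?_, ?_, ?_⟩
    · rw [List.length_append, List.length_singleton]
      omega
    · simpa [or_imp, forall_and] using ⟨hTs, hT⟩
    · rw [List.prod_append, List.prod_singleton, ← mulVec_mulVec, hprod]

end Majorization

theorem majorization_T_transform_general (K : ℕ) (x z : Fin K → ℝ)
    (hz : Antitone z)
    (hmaj : ∀ m ≤ K, ∑ n ∈ Finset.univ.filter (fun n : Fin K => (n : ℕ) < m), z n ≤
        ∑ n ∈ Finset.univ.filter (fun n : Fin K => (n : ℕ) < m), x n)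
    (hsum : ∑ n : Fin K, z n = ∑ n : Fin K, x n) :
    ∃ Ts : List (Matrix (Fin K) (Fin K) ℝ),
      Ts.length ≤ K - 1 ∧
      (∀ T ∈ Ts, ∃ (t : ℝ) (i j : Fin K), 0 ≤ t ∧ t ≤ 1 ∧ i ≠ j ∧
        T = t • (1 : Matrix (Fin K) (Fin K) ℝ) + (1 - t) • (Equiv.swap i j).permMatrix ℝ) ∧
      Ts.prod.mulVec x = z := by
  obtain ⟨Ts, hlen, hTs, hprod⟩ := Majorizes.exists_list_isTTransform hz ⟨hmaj, hsum⟩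
  have hcard : #{n | x n ≠ z n} ≤ K := (card_filter_le _ _).trans_eq (card_fin K)
  exact ⟨Ts, hlen.trans (Nat.sub_le_sub_right hcard 1), hTs, hprod⟩

/-- **Preliminary 3 (Hardy–Littlewood–Pólya T-transform theorem).** If `x` majorizes `z`
(both antitone), then `z` is obtained from `x` by applying at most `K − 1` T-transforms,
i.e. matrices of the form `t • 1 + (1 − t) • P` with `t ∈ [0,1]` and `P` the permutation
matrix of a transposition. -/
theorem majorization_T_transform (K : ℕ) (x z : Fin K → ℝ)
    (hx : Antitone x) (hz : Antitone z)
    (hmaj : ∀ m ≤ K, ∑ n ∈ Finset.univ.filter (fun n : Fin K => (n : ℕ) < m), z n ≤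
        ∑ n ∈ Finset.univ.filter (fun n : Fin K => (n : ℕ) < m), x n)
    (hsum : ∑ n : Fin K, z n = ∑ n : Fin K, x n) :
    ∃ Ts : List (Matrix (Fin K) (Fin K) ℝ),
      Ts.length ≤ K - 1 ∧
      (∀ T ∈ Ts, ∃ (t : ℝ) (i j : Fin K), 0 ≤ t ∧ t ≤ 1 ∧ i ≠ j ∧
        T = t • (1 : Matrix (Fin K) (Fin K) ℝ) + (1 - t) • (Equiv.swap i j).permMatrix ℝ) ∧
      Ts.prod.mulVec x = z :=
  majorization_T_transform_general K x z hz hmaj hsum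
end

section
/- Let K and τ be positive integers with τ ≤ K, let B > 0, and let x : Fin K → ℝ be given by x_i = B for i < τ and x_i = 0 for i ≥ τ. Let U be a real orthogonal K×K matrix and z : Fin K → ℝ with z_k > 0 for all k such that (Uᵀ · (diagonal x) · U)_{kk} = z_k for every k. Define Q : Matrix (Fin τ) (Fin K) ℝ by Q_{ik} = √(B / z_k) · U_{ik} (the first τ rows of U with columns rescaled). Then every column of Q has unit Euclidean norm, and Q · (diagonal z) · Qᵀ = B • (1 : Matrix (Fin τ) (Fin τ) ℝ). -/
open Matrix

/-- **Correctness of the final steps of Algorithm 1.** Let `x` be `B > 0` on its first `τ`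
entries and `0` afterwards, let `U` be orthogonal with `(Uᵀ * diagonal x * U) k k = z k`
for positive `z`, and let `Q i k = √(B / z k) * U i k` (first `τ` rows of `U`, columns
rescaled). Then every column of `Q` is unit-norm and `Q * diagonal z * Qᵀ = B • 1`. -/
theorem algorithm_pilot_matrix_correct (K τ : ℕ) (hK : 0 < K) (hτ : 0 < τ) (hτK : τ ≤ K)
    (B : ℝ) (hB : 0 < B)
    (x : Fin K → ℝ) (hx : ∀ i : Fin K, x i = if (i : ℕ) < τ then B else 0)
    (U : Matrix (Fin K) (Fin K) ℝ) (hU : Uᵀ * U = 1)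
    (z : Fin K → ℝ) (hz : ∀ k, 0 < z k)
    (hdiag : ∀ k, (Uᵀ * Matrix.diagonal x * U) k k = z k)
    (Q : Matrix (Fin τ) (Fin K) ℝ)
    (hQ : ∀ (i : Fin τ) (k : Fin K), Q i k = Real.sqrt (B / z k) * U (Fin.castLE hτK i) k) :
    (∀ k, ∑ i : Fin τ, Q i k ^ 2 = 1) ∧
    Q * Matrix.diagonal z * Qᵀ = B • (1 : Matrix (Fin τ) (Fin τ) ℝ) := by
  have hfilter : (Finset.univ.filter (fun j : Fin K => (j:ℕ) < τ))
      = Finset.univ.map (Fin.castLEEmb hτK) := by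
    ext j; simp [Fin.castLEEmb, Fin.castLE]
    constructor
    · intro h; exact ⟨⟨j, h⟩, rfl⟩
    · rintro ⟨i, rfl⟩; exact i.isLt
  have hsum : ∀ (g : Fin K → ℝ),
      ∑ j : Fin K, (if (j:ℕ) < τ then g j else 0) = ∑ i : Fin τ, g (Fin.castLE hτK i) := by
    intro g
    rw [← Finset.sum_filter, hfilter, Finset.sum_map]; rfl
  have key : ∀ k, B * ∑ i : Fin τ, U (Fin.castLE hτK i) k ^ 2 = z k := by
    intro k
    have h := hdiag k
    simp only [Matrix.mul_apply, Matrix.diagonal_apply, Matrix.transpose_apply] at h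
    rw [← h, Finset.mul_sum]
    rw [← hsum (fun j => B * U j k ^ 2)]
    apply Finset.sum_congr rfl
    intro j _
    simp [Finset.sum_ite_eq, hx j]
    by_cases hj : (j:ℕ) < τ <;> simp [hj] <;> ring
  have hsqrt : ∀ k, Real.sqrt (B / z k) ^ 2 = B / z k := fun k =>
    Real.sq_sqrt (le_of_lt (div_pos hB (hz k)))
  constructor
  · intro k
    have hk := key k
    calc ∑ i : Fin τ, Q i k ^ 2
        = ∑ i : Fin τ, (B / z k) * U (Fin.castLE hτK i) k ^ 2 := by
          apply Finset.sum_congr rfl; intro i _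
          rw [hQ, mul_pow, hsqrt]
      _ = (B * ∑ i : Fin τ, U (Fin.castLE hτK i) k ^ 2) / z k := by
          rw [← Finset.mul_sum]; ring
      _ = 1 := by rw [hk]; exact div_self (hz k).ne'
  · have hUUT : U * Uᵀ = 1 := mul_eq_one_comm.mp hU
    ext i j
    have hij := congrFun (congrFun hUUT (Fin.castLE hτK i)) (Fin.castLE hτK j)
    simp only [Matrix.mul_apply, Matrix.transpose_apply] at hij ⊢
    simp only [Matrix.diagonal_apply, Finset.sum_ite_eq, Finset.mem_univ, if_true]
    have : ∀ k, (∑ l, Q i l * (if l = k then z l else 0)) * Q j k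
        = B * (U (Fin.castLE hτK i) k * U (Fin.castLE hτK j) k) := by
      intro k
      rw [Finset.sum_eq_single k (by intro l _ hl; simp [hl]) (by simp)]
      simp only [if_pos, if_true]
      rw [hQ, hQ]
      have h2 : Real.sqrt (B / z k) * U (Fin.castLE hτK i) k * z k *
          (Real.sqrt (B / z k) * U (Fin.castLE hτK j) k)
          = (Real.sqrt (B / z k) ^2 * z k) * (U (Fin.castLE hτK i) k * U (Fin.castLE hτK j) k) := by
        ring
      rw [h2, hsqrt, div_mul_cancel₀ _ (hz k).ne']
    rw [Finset.sum_congr rfl (fun k _ => this k), ← Finset.mul_sum, hij]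
    by_cases h : i = j
    · subst h; simp
    · have : Fin.castLE hτK i ≠ Fin.castLE hτK j := by
        simp [Fin.castLE, Fin.ext_iff] at *
        exact fun hh => h hh
      simp [Matrix.one_apply, h, this]
end

section
/- Let K and τ be positive integers with τ ≤ K, and let z : Fin K → ℝ satisfy z_k > 0 for all k and z_k ≤ (Σ_{j} z_j)/τ for all k. Set B = (Σ_j z_j)/τ. Then there exists a matrix Q : Matrix (Fin τ) (Fin K) ℝ whose columns q_1, …, q_K all have unit Euclidean norm and which satisfies Q · (diagonal z) · Qᵀ = B • (1 : Matrix (Fin τ) (Fin τ) ℝ). -/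
/-! Rescaling column `k` by `√(z k)`, it suffices to find vectors `v k ∈ ℝ^τ` with
`‖v k‖² = z k` and `∑ k, v k (v k)ᵀ = B • 1`: a tight frame with prescribed norms.
Induct on `K`. If `τ = K`, all weights equal `B` and `√B` times the standard basis works.
Otherwise pick two weights `a, b`. If `a + b ≤ B`, build a frame for the merged weight `a + b`
and split its vector `p` into two multiples of `p`. If `a + b > B`, build a frame in dimension
`τ - 1` with the weight `a + b - B`, embed it in `ℝ^τ` next to a new vector `√B e₀`, and split
this orthogonal pair. Both splittings are rotations in the plane of two orthogonal vectors
`p, q`: a rotation preserves `p pᵀ + q qᵀ`, and the squared norm of the first rotated vector runs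
through every value between `‖p‖²` and `‖q‖²`. -/

open Matrix Finset

section TightFrame

variable {ι n : Type*} [Fintype ι]

def frameOperator (v : ι → n → ℝ) : Matrix n n ℝ := ∑ k, vecMulVec (v k) (v k)

def IsTightFrame [Fintype n] [DecidableEq n] (v : ι → n → ℝ) (z : ι → ℝ) (B : ℝ) : Prop :=
  (∀ k, v k ⬝ᵥ v k = z k) ∧ frameOperator v = B • 1

lemma frameOperator_apply (v : ι → n → ℝ) (i j : n) :
    frameOperator v i j = ∑ k, v k i * v k j := by
  simp [frameOperator, Matrix.sum_apply, vecMulVec_apply]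

lemma frameOperator_fin_succ {K : ℕ} (v : Fin (K + 1) → n → ℝ) :
    frameOperator v = vecMulVec (v 0) (v 0) + frameOperator (Fin.tail v) :=
  Fin.sum_univ_succ _

lemma frameOperator_cons {K : ℕ} (u : n → ℝ) (v : Fin K → n → ℝ) :
    frameOperator (Fin.cons u v : Fin (K + 1) → n → ℝ) = vecMulVec u u + frameOperator v :=
  frameOperator_fin_succ _

lemma exists_vecMulVec_add_vecMulVec_eq [Fintype n] {p q : n → ℝ} (hpq : p ⬝ᵥ q = 0) {a b : ℝ}
    (ha : a ∈ Set.uIcc (p ⬝ᵥ p) (q ⬝ᵥ q)) (hab : a + b = p ⬝ᵥ p + q ⬝ᵥ q) :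
    ∃ u u' : n → ℝ, u ⬝ᵥ u = a ∧ u' ⬝ᵥ u' = b ∧
      vecMulVec u u + vecMulVec u' u' = vecMulVec p p + vecMulVec q q := by
  rw [← segment_eq_uIcc] at ha
  obtain ⟨s, t, hs, ht, hst, rfl⟩ := ha
  have hs' := Real.mul_self_sqrt hs
  have ht' := Real.mul_self_sqrt ht
  refine ⟨√s • p + √t • q, √t • p - √s • q, ?_, ?_, ?_⟩
  · simp only [add_dotProduct, dotProduct_add, smul_dotProduct, dotProduct_smul, smul_eq_mul,
      dotProduct_comm q p, hpq]
    linear_combination (p ⬝ᵥ p) * hs' + (q ⬝ᵥ q) * ht'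
  · simp only [sub_dotProduct, dotProduct_sub, smul_dotProduct, dotProduct_smul, smul_eq_mul,
      dotProduct_comm q p, hpq] at hab ⊢
    linear_combination (p ⬝ᵥ p) * ht' + (q ⬝ᵥ q) * hs' - hab + (p ⬝ᵥ p + q ⬝ᵥ q) * hst
  · ext i j
    simp only [Matrix.add_apply, vecMulVec_apply, Pi.add_apply, Pi.sub_apply, Pi.smul_apply,
      smul_eq_mul]
    linear_combination (p i * p j + q i * q j) * (hs' + ht' + hst)

variable [Fintype n] [DecidableEq n]

lemma isTightFrame_single (c : ℝ) :
    IsTightFrame (fun k : n => Pi.single k c) (fun _ => c * c) (c * c) := by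
  refine ⟨fun k => by simp, ?_⟩
  ext i j
  rw [frameOperator_apply]
  by_cases h : i = j <;> simp [h, Pi.single_apply, one_apply]

lemma exists_isTightFrame_const {B : ℝ} (hB : 0 ≤ B) :
    ∃ v : n → n → ℝ, IsTightFrame v (fun _ => B) B := by
  have h := isTightFrame_single (n := n) (√B)
  rw [Real.mul_self_sqrt hB] at h
  exact ⟨_, h⟩

lemma exists_isTightFrame_cons_cons {K : ℕ} {B a b : ℝ} {z : Fin K → ℝ} {p q : n → ℝ}
    {w : Fin K → n → ℝ} (hw : ∀ k, w k ⬝ᵥ w k = z k)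
    (hF : vecMulVec p p + vecMulVec q q + frameOperator w = B • 1) (hpq : p ⬝ᵥ q = 0)
    (ha : a ∈ Set.uIcc (p ⬝ᵥ p) (q ⬝ᵥ q)) (hab : a + b = p ⬝ᵥ p + q ⬝ᵥ q) :
    ∃ v : Fin (K + 2) → n → ℝ, IsTightFrame v (Fin.cons a (Fin.cons b z)) B := by
  obtain ⟨u, u', hu, hu', huu'⟩ := exists_vecMulVec_add_vecMulVec_eq hpq ha hab
  refine ⟨Fin.cons u (Fin.cons u' w), ?_, ?_⟩
  · simp only [Fin.forall_fin_succ, Fin.cons_zero, Fin.cons_succ]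
    exact ⟨hu, hu', hw⟩
  · rw [frameOperator_cons, frameOperator_cons, ← add_assoc, huu', hF]

lemma IsTightFrame.exists_merge {K : ℕ} {B a b : ℝ} {z : Fin K → ℝ} {v : Fin (K + 1) → n → ℝ}
    (hv : IsTightFrame v (Fin.cons (a + b) z) B) (ha : 0 ≤ a) (hb : 0 ≤ b) :
    ∃ v' : Fin (K + 2) → n → ℝ, IsTightFrame v' (Fin.cons a (Fin.cons b z)) B := by
  obtain ⟨hnorm, hF⟩ := hv
  have h0 : v 0 ⬝ᵥ v 0 = a + b := hnorm 0
  refine exists_isTightFrame_cons_cons (p := v 0) (q := 0) (w := Fin.tail v)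
    (fun k => hnorm k.succ) ?_ (dotProduct_zero _) ?_ ?_
  · rwa [vecMulVec_zero, add_zero, ← frameOperator_fin_succ]
  · rw [h0, zero_dotProduct]
    exact Set.mem_uIcc.2 (Or.inr ⟨ha, le_add_of_nonneg_right hb⟩)
  · rw [h0, dotProduct_zero, add_zero]

end TightFrame

lemma Fin.cons_dotProduct_cons {d : ℕ} (x y : ℝ) (v w : Fin d → ℝ) :
    (Fin.cons x v : Fin (d + 1) → ℝ) ⬝ᵥ Fin.cons y w = x * y + v ⬝ᵥ w :=
  Matrix.cons_dotProduct_cons x v y w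

lemma vecMulVec_add_frameOperator_cons_zero {K d : ℕ} (c : ℝ) (v : Fin K → Fin d → ℝ)
    (hv : frameOperator v = (c * c) • 1) :
    vecMulVec (Fin.cons c 0) (Fin.cons c 0) +
        frameOperator (fun k => (Fin.cons 0 (v k) : Fin (d + 1) → ℝ)) = (c * c) • 1 := by
  ext i j
  rw [Matrix.add_apply, frameOperator_apply, vecMulVec_apply]
  cases i using Fin.cases <;> cases j using Fin.cases <;>
    simp [← frameOperator_apply, hv, one_apply, Fin.succ_ne_zero, (Fin.succ_ne_zero _).symm]

lemma IsTightFrame.exists_split {K d : ℕ} {B a b : ℝ} {z : Fin K → ℝ}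
    {v : Fin (K + 1) → Fin d → ℝ} (hv : IsTightFrame v (Fin.cons (a + b - B) z) B)
    (haB : a ≤ B) (hbB : b ≤ B) :
    ∃ v' : Fin (K + 2) → Fin (d + 1) → ℝ, IsTightFrame v' (Fin.cons a (Fin.cons b z)) B := by
  obtain ⟨hnorm, hF⟩ := hv
  have h0 : v 0 ⬝ᵥ v 0 = a + b - B := hnorm 0
  have h0_nonneg : 0 ≤ v 0 ⬝ᵥ v 0 := by simpa using dotProduct_star_self_nonneg (v 0)
  have hB : √B * √B = B := Real.mul_self_sqrt (by linarith)
  have hlift := vecMulVec_add_frameOperator_cons_zero (√B) v (by rw [hB, hF])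
  rw [frameOperator_fin_succ, hB] at hlift
  refine exists_isTightFrame_cons_cons (p := Fin.cons 0 (v 0)) (q := Fin.cons (√B) 0)
    (w := fun k => Fin.cons 0 (v k.succ)) (fun k => ?_) ?_ ?_ ?_ ?_
  · rw [Fin.cons_dotProduct_cons, hnorm k.succ, zero_mul, zero_add]
    rfl
  · rw [← hlift]
    abel
  · rw [Fin.cons_dotProduct_cons, zero_mul, dotProduct_zero, add_zero]
  · rw [Fin.cons_dotProduct_cons, Fin.cons_dotProduct_cons, h0, hB]
    simp only [mul_zero, zero_add, dotProduct_zero, add_zero]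
    exact Set.mem_uIcc.2 (Or.inl ⟨by linarith, haB⟩)
  · rw [Fin.cons_dotProduct_cons, Fin.cons_dotProduct_cons, h0, hB]
    simp only [mul_zero, zero_add, dotProduct_zero, add_zero]
    ring

theorem exists_isTightFrame {K d : ℕ} {B : ℝ} {z : Fin K → ℝ} (hdK : d ≤ K) (hB : 0 ≤ B)
    (hz : ∀ k, 0 < z k) (hzB : ∀ k, z k ≤ B) (hsum : ∑ k, z k = d * B) :
    ∃ v : Fin K → Fin d → ℝ, IsTightFrame v z B := by
  induction K using Nat.strong_induction_on generalizing d with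
  | _ K ih =>
  rcases hdK.eq_or_lt with rfl | hdK
  · obtain rfl : z = fun _ => B := funext fun k =>
      (sum_eq_sum_iff_of_le fun k _ => hzB k).1 (by simpa using hsum) k (mem_univ k)
    exact exists_isTightFrame_const hB
  have hd : d ≠ 0 := by
    rintro rfl
    have : 0 < ∑ k, z k := sum_pos (fun k _ => hz k) ⟨⟨0, by omega⟩, mem_univ _⟩
    rw [Nat.cast_zero, zero_mul] at hsum
    linarith
  obtain ⟨n, rfl⟩ : ∃ n, K = n + 2 := ⟨K - 2, by omega⟩
  obtain ⟨d, rfl⟩ := Nat.exists_eq_succ_of_ne_zero hd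
  cases z using Fin.consCases with | cons a z =>
  cases z using Fin.consCases with | cons b z =>
  simp only [Fin.forall_fin_succ, Fin.cons_zero, Fin.cons_succ] at hz hzB
  simp only [Fin.sum_cons, Nat.cast_succ] at hsum
  have ih_cons {d' : ℕ} (c : ℝ) (hd' : d' ≤ n + 1) (hc : 0 < c) (hcB : c ≤ B)
      (hs : c + ∑ k, z k = d' * B) :
      ∃ v : Fin (n + 1) → Fin d' → ℝ, IsTightFrame v (Fin.cons c z) B :=
    ih (n + 1) (by omega) hd' (Fin.forall_fin_succ.2 ⟨hc, hz.2.2⟩)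
      (Fin.forall_fin_succ.2 ⟨hcB, hzB.2.2⟩) (by rwa [Fin.sum_cons])
  by_cases hab : a + b ≤ B
  · obtain ⟨v, hv⟩ := ih_cons (d' := d + 1) (a + b) (by omega) (by linarith) hab
      (by push_cast; linarith)
    exact hv.exists_merge hz.1.le hz.2.1.le
  · obtain ⟨v, hv⟩ := ih_cons (d' := d) (a + b - B) (by omega) (by linarith) (by linarith)
      (by linarith)
    exact hv.exists_split hzB.1 hzB.2.1

lemma sum_div_sqrt_sq_eq_one {n : Type*} [Fintype n] {x : n → ℝ} {c : ℝ} (hx : x ⬝ᵥ x = c)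
    (hc : 0 < c) : ∑ i, (x i / √c) ^ 2 = 1 := by
  simp only [div_pow, Real.sq_sqrt hc.le, ← sum_div]
  rw [div_eq_one_iff_eq hc.ne', ← hx, dotProduct]
  simp only [sq]

lemma of_div_sqrt_mul_diagonal_mul_transpose {ι n : Type*} [Fintype ι] [DecidableEq ι]
    {v : ι → n → ℝ} {z : ι → ℝ} (hz : ∀ k, 0 < z k) :
    (of fun i k => v k i / √(z k) : Matrix n ι ℝ) * diagonal z *
        (of fun i k => v k i / √(z k) : Matrix n ι ℝ)ᵀ = frameOperator v := by
  ext i j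
  rw [mul_apply, frameOperator_apply]
  simp only [mul_diagonal, transpose_apply, of_apply]
  refine sum_congr rfl fun k _ => ?_
  have := Real.sqrt_pos.2 (hz k)
  field_simp
  rw [Real.sq_sqrt (hz k).le]

theorem gwbe_pilot_sequences_exist_general (K τ : ℕ) (hτ : 0 < τ) (hτK : τ ≤ K)
    (z : Fin K → ℝ) (hz : ∀ k, 0 < z k)
    (hzB : ∀ k, z k ≤ (∑ j : Fin K, z j) / (τ : ℝ)) :
    ∃ Q : Matrix (Fin τ) (Fin K) ℝ,
      (∀ k, ∑ i : Fin τ, Q i k ^ 2 = 1) ∧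
      Q * Matrix.diagonal z * Qᵀ =
        ((∑ j : Fin K, z j) / (τ : ℝ)) • (1 : Matrix (Fin τ) (Fin τ) ℝ) := by
  have hB : 0 ≤ (∑ j, z j) / τ := div_nonneg (sum_nonneg fun k _ => (hz k).le) τ.cast_nonneg
  have hsum : ∑ j, z j = τ * ((∑ j, z j) / τ) := by field_simp
  obtain ⟨v, hnorm, hframe⟩ := exists_isTightFrame hτK hB hz hzB hsum
  exact ⟨_, fun k => sum_div_sqrt_sq_eq_one (hnorm k) (hz k),
    (of_div_sqrt_mul_diagonal_mul_transpose hz).trans hframe⟩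

/-- **Existence of GWBE pilot sequences (Algorithm 1).** For positive weights `z` with
`z k ≤ (∑ j z j)/τ` and `τ ≤ K`, there exists a `τ×K` matrix `Q` with unit-norm columns
satisfying the generalized Welch bound equality `Q * diagonal z * Qᵀ = B • 1`, where
`B = (∑ j z j)/τ`. -/
theorem gwbe_pilot_sequences_exist (K τ : ℕ) (hK : 0 < K) (hτ : 0 < τ) (hτK : τ ≤ K)
    (z : Fin K → ℝ) (hz : ∀ k, 0 < z k)
    (hzB : ∀ k, z k ≤ (∑ j : Fin K, z j) / (τ : ℝ)) :
    ∃ Q : Matrix (Fin τ) (Fin K) ℝ,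
      (∀ k, ∑ i : Fin τ, Q i k ^ 2 = 1) ∧
      Q * Matrix.diagonal z * Qᵀ =
        ((∑ j : Fin K, z j) / (τ : ℝ)) • (1 : Matrix (Fin τ) (Fin τ) ℝ) :=
  gwbe_pilot_sequences_exist_general K τ hτ hτK z hz hzB
end

section
/- Let K and τ be positive integers with τ ≤ K, and let γ : Fin K → ℝ with γ_k > 0 for all k. Set z_k = γ_k/(1 + γ_k) and B = (Σ_j z_j)/τ, and suppose Σ_k z_k ≤ τ (the load-region condition) and z_k < B for every k. Then there exist unit-norm vectors q_1, …, q_K ∈ ℝ^τ such that for every k, setting s_k = Σ_{j=1}^{K} z_j ⟨q_k, q_j⟩², one has z_k < s_k and z_k/(s_k − z_k) ≥ γ_k; i.e., the asymptotic SINR lower bound of every user meets its SINR requirement. -/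
/-!
With `w k = z k / B`, the weights lie in `(0, 1]` and sum to `τ`. Such weights always admit unit
vectors `q k ∈ ℝ^τ` with `∑ k, w k • q k ⊗ q k = 1`, by induction on the number of vectors: if all
weights are `1`, take an orthonormal basis; otherwise two weights `a, b < 1` exist, and they are
either merged into one vector of weight `a + b ≤ 1`, or, if `a + b > 1`, replaced by a vector of
weight `a + b - 1` in the orthogonal complement of a unit vector `e`, from which two vectors in the
plane of `e` are rebuilt. Testing the frame identity on `q k` gives `s k = B` for every `k`, and
`z k / (B - z k) ≥ γ k` is then equivalent to the load condition `B ≤ 1`.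
-/

open Finset Module
open scoped RealInnerProductSpace

universe u v

variable {ι : Type u} {E : Type v} [Fintype ι] [NormedAddCommGroup E] [InnerProductSpace ℝ E]

/-- Unit vectors with `∑ k, w k • q k ⊗ q k = 1`, i.e. `√(w k) • q k` is a Parseval frame; for
`w = z / B` these are the paper's GWBE sequences. -/
structure IsWeightedParsevalFrame (w : ι → ℝ) (q : ι → E) : Prop where
  norm_eq_one : ∀ k, ‖q k‖ = 1
  sum_mul_inner_sq : ∀ x, ∑ k, w k * ⟪q k, x⟫ ^ 2 = ‖x‖ ^ 2

theorem OrthonormalBasis.isWeightedParsevalFrame (b : OrthonormalBasis ι ℝ E) :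
    IsWeightedParsevalFrame 1 b where
  norm_eq_one := b.orthonormal.1
  sum_mul_inner_sq x := by
    simpa [sq, real_inner_comm x, real_inner_self_eq_norm_sq] using b.sum_inner_mul_inner x x

theorem IsWeightedParsevalFrame.comp_equiv {κ : Type*} [Fintype κ] (σ : κ ≃ ι) {w : ι → ℝ}
    {q : κ → E} (h : IsWeightedParsevalFrame (w ∘ σ) q) :
    IsWeightedParsevalFrame w (q ∘ σ.symm) where
  norm_eq_one k := h.norm_eq_one _
  sum_mul_inner_sq x := by
    rw [← h.sum_mul_inner_sq x, ← σ.sum_comp]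
    simp

theorem IsWeightedParsevalFrame.merge {w : Option (Option ι) → ℝ} {q : Option ι → E}
    (hq : IsWeightedParsevalFrame
      (fun k => k.elim (w (some none) + w none) fun k => w (some (some k))) q) :
    IsWeightedParsevalFrame w (fun k => k.elim (q none) q) where
  norm_eq_one k := by cases k <;> simp [hq.norm_eq_one]
  sum_mul_inner_sq x := by
    have := hq.sum_mul_inner_sq x
    simp only [Fintype.sum_option, Option.elim] at this ⊢
    linear_combination this

theorem norm_smul_add_smul_eq_one {e f : E} (he : ‖e‖ = 1) (hf : ‖f‖ = 1) (hef : ⟪e, f⟫ = 0)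
    {c s : ℝ} (hcs : c ^ 2 + s ^ 2 = 1) : ‖c • e + s • f‖ = 1 := by
  have : ‖c • e + s • f‖ ^ 2 = 1 ^ 2 := by
    rw [norm_add_sq_real, norm_smul, norm_smul, real_inner_smul_left, real_inner_smul_right, hef,
      he, hf, Real.norm_eq_abs, Real.norm_eq_abs]
    simpa using hcs
  exact (sq_eq_sq₀ (norm_nonneg _) zero_le_one).1 this

theorem exists_orthogonal_component {e : E} (he : ‖e‖ = 1) (x : E) :
    ∃ y : (ℝ ∙ e)ᗮ, ‖x‖ ^ 2 = ⟪e, x⟫ ^ 2 + ‖y‖ ^ 2 ∧ ∀ g : (ℝ ∙ e)ᗮ, ⟪(g : E), x⟫ = ⟪g, y⟫ := by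
  have hy : ⟪e, x - ⟪e, x⟫ • e⟫ = 0 := by
    rw [inner_sub_right, real_inner_smul_right, real_inner_self_eq_norm_sq, he]
    ring
  refine ⟨⟨_, Submodule.mem_orthogonal_singleton_iff_inner_right.2 hy⟩, ?_, fun g => ?_⟩
  · conv_lhs => rw [← add_sub_cancel (⟪e, x⟫ • e) x]
    rw [norm_add_sq_real, real_inner_smul_left, norm_smul, he, mul_one, Real.norm_eq_abs, sq_abs]
    simp [hy]
  · have hge : ⟪(g : E), e⟫ = 0 := by
      rw [real_inner_comm]; exact Submodule.mem_orthogonal_singleton_iff_inner_right.1 g.2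
    rw [Submodule.coe_inner, inner_sub_right, real_inner_smul_right, hge]
    ring

theorem exists_norm_eq_one_finrank_orthogonal [FiniteDimensional ℝ E] (h : 0 < finrank ℝ E) :
    ∃ e : E, ‖e‖ = 1 ∧ finrank ℝ (ℝ ∙ e)ᗮ + 1 = finrank ℝ E := by
  have := Module.finrank_pos_iff.1 h
  obtain ⟨e, he⟩ := exists_norm_eq E zero_le_one
  refine ⟨e, he, ?_⟩
  rw [← Submodule.finrank_add_finrank_orthogonal (ℝ ∙ e),
    finrank_span_singleton (norm_ne_zero_iff.1 (he ▸ one_ne_zero)), add_comm]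

theorem IsWeightedParsevalFrame.split {e : E} (he : ‖e‖ = 1) {w : Option (Option ι) → ℝ}
    {q : Option ι → (ℝ ∙ e)ᗮ}
    (hq : IsWeightedParsevalFrame
      (fun k => k.elim (w (some none) + w none - 1) fun k => w (some (some k))) q)
    {c s c' s' : ℝ} (hcs : c ^ 2 + s ^ 2 = 1) (hcs' : c' ^ 2 + s' ^ 2 = 1)
    (hpair : ∀ X Y : ℝ, w (some none) * (c * X + s * Y) ^ 2 + w none * (c' * X + s' * Y) ^ 2 =
      X ^ 2 + (w (some none) + w none - 1) * Y ^ 2) :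
    IsWeightedParsevalFrame w fun k =>
      k.elim (c' • e + s' • (q none : E)) fun k =>
        k.elim (c • e + s • (q none : E)) fun k => q (some k) where
  norm_eq_one k := by
    have hf : ⟪e, (q none : E)⟫ = 0 :=
      Submodule.mem_orthogonal_singleton_iff_inner_right.1 (q none).2
    rcases k with _ | _ | k
    · exact norm_smul_add_smul_eq_one he (hq.norm_eq_one none) hf hcs'
    · exact norm_smul_add_smul_eq_one he (hq.norm_eq_one none) hf hcs
    · exact hq.norm_eq_one (some k)
  sum_mul_inner_sq x := by
    obtain ⟨y, hxy, hinner⟩ := exists_orthogonal_component he x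
    have := hq.sum_mul_inner_sq y
    simp only [Fintype.sum_option, Option.elim, inner_add_left, real_inner_smul_left,
      hinner] at this ⊢
    linear_combination this + hpair ⟪e, x⟫ ⟪q none, y⟫ - hxy

theorem exists_ne_lt_one {w : ι → ℝ} (hw0 : ∀ k, 0 < w k) (hw1 : ∀ k, w k ≤ 1) {n : ℕ}
    (hsum : ∑ k, w k = n) {i : ι} (hi : w i < 1) : ∃ j, j ≠ i ∧ w j < 1 := by
  classical
  by_contra! h
  have hsum' : ∑ k, w k = w i + (Fintype.card ι - 1 : ℕ) := by
    rw [← Finset.add_sum_erase _ _ (mem_univ i), Finset.sum_congr rfl fun j hj =>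
      le_antisymm (hw1 j) (h j (ne_of_mem_erase hj))]
    simp [card_erase_of_mem]
  rw [hsum] at hsum'
  have hlo : ((Fintype.card ι - 1 : ℕ) : ℝ) < n := by linarith [hw0 i]
  have hhi : (n : ℝ) < (Fintype.card ι - 1 : ℕ) + 1 := by linarith
  norm_cast at hlo hhi
  omega

theorem exists_split_coeffs {a b : ℝ} (ha0 : 0 < a) (ha1 : a < 1) (hb0 : 0 < b) (hb1 : b < 1)
    (hab : 1 < a + b) :
    ∃ c s c' s' : ℝ, c ^ 2 + s ^ 2 = 1 ∧ c' ^ 2 + s' ^ 2 = 1 ∧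
      ∀ X Y : ℝ,
        a * (c * X + s * Y) ^ 2 + b * (c' * X + s' * Y) ^ 2 = X ^ 2 + (a + b - 1) * Y ^ 2 := by
  have hd : 0 < 2 - a - b := by linarith
  have hsqrt {t : ℝ} (ht : 0 ≤ t) : ∃ p : ℝ, p ^ 2 = t := ⟨√t, Real.sq_sqrt ht⟩
  obtain ⟨p, hp⟩ := hsqrt (show 0 ≤ 1 - a by linarith)
  obtain ⟨r, hr⟩ := hsqrt (show 0 ≤ 1 - b by linarith)
  obtain ⟨m, hm⟩ := hsqrt (show 0 ≤ a + b - 1 by linarith)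
  obtain ⟨α, hα⟩ := hsqrt (show 0 ≤ a * (2 - a - b) by positivity)
  obtain ⟨β, hβ⟩ := hsqrt (show 0 ≤ b * (2 - a - b) by positivity)
  have hα0 : α ≠ 0 := by rintro rfl; nlinarith [mul_pos ha0 hd]
  have hβ0 : β ≠ 0 := by rintro rfl; nlinarith [mul_pos hb0 hd]
  -- `a c s = p r m / (2 - a - b) = - b c' s'`, so the cross terms cancel.
  refine ⟨r / α, p * m / α, p / β, - (r * m / β), ?_, ?_, fun X Y => ?_⟩
  · field_simp
    rw [hp, hm, hr, hα]; ring
  · field_simp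
    rw [hp, hm, hr, hβ]; ring
  · field_simp
    rw [hα, hβ]
    linear_combination a * b * (2 - a - b) * (X ^ 2 + m ^ 2 * Y ^ 2) * (hp + hr)
      + a * b * (2 - a - b) ^ 2 * Y ^ 2 * hm

theorem exists_isWeightedParsevalFrame [FiniteDimensional ℝ E] (w : ι → ℝ) (hw0 : ∀ k, 0 < w k)
    (hw1 : ∀ k, w k ≤ 1) (hsum : ∑ k, w k = finrank ℝ E) :
    ∃ q : ι → E, IsWeightedParsevalFrame w q := by
  classical
  obtain ⟨n, hn⟩ : ∃ n, Fintype.card ι = n := ⟨_, rfl⟩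
  induction n using Nat.strong_induction_on generalizing ι E with
  | _ n ih =>
    by_cases hone : ∀ k, w k = 1
    · have hcard : Fintype.card ι = finrank ℝ E := by
        exact_mod_cast (by simpa [hone] using hsum : (Fintype.card ι : ℝ) = finrank ℝ E)
      obtain rfl : w = 1 := funext hone
      exact ⟨_, ((stdOrthonormalBasis ℝ E).reindex
        (Fintype.equivFinOfCardEq hcard).symm).isWeightedParsevalFrame⟩
    obtain ⟨i, hi⟩ := not_forall.1 hone
    obtain ⟨j, hji, hj⟩ := exists_ne_lt_one hw0 hw1 hsum ((hw1 i).lt_of_ne hi)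
    let κ := {k : {k // k ≠ j} // k ≠ ⟨i, hji.symm⟩}
    let σ : Option (Option κ) ≃ ι :=
      (Equiv.optionCongr (Equiv.optionSubtypeNe _)).trans (Equiv.optionSubtypeNe j)
    have hκ : Fintype.card (Option κ) < n := by
      have := Fintype.card_congr σ; simp only [Fintype.card_option] at this ⊢; omega
    suffices ∃ q, IsWeightedParsevalFrame (w ∘ σ) q from
      let ⟨q, hq⟩ := this; ⟨_, hq.comp_equiv σ⟩
    have hsumσ : w i + w j + ∑ k : κ, w k = finrank ℝ E := by
      rw [← hsum, ← σ.sum_comp, Fintype.sum_option, Fintype.sum_option, add_comm (w i), add_assoc]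
      rfl
    rcases le_or_gt (w i + w j) 1 with hmerge | hsplit
    · obtain ⟨q, hq⟩ := ih _ hκ (E := E) (fun k => k.elim (w i + w j) fun k => w k)
        (by rintro (_ | k) <;> simp [hw0, add_pos])
        (by rintro (_ | k) <;> simp [hw1, hmerge])
        (by rw [Fintype.sum_option]; exact hsumσ) rfl
      exact ⟨_, hq.merge⟩
    · have hE : (0 : ℝ) < finrank ℝ E := by
        have hκ0 : 0 ≤ ∑ k : κ, w k := sum_nonneg fun k _ => (hw0 _).le
        rw [← hsumσ]; linarith
      obtain ⟨e, he, hF⟩ := exists_norm_eq_one_finrank_orthogonal (E := E) (by exact_mod_cast hE)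
      obtain ⟨c, s, c', s', hcs, hcs', hpair⟩ :=
        exists_split_coeffs (hw0 i) ((hw1 i).lt_of_ne hi) (hw0 j) hj hsplit
      obtain ⟨q, hq⟩ := ih _ hκ (E := (ℝ ∙ e)ᗮ) (fun k => k.elim (w i + w j - 1) fun k => w k)
        (by rintro (_ | k) <;> simp [hw0]; linarith)
        (by rintro (_ | k) <;> simp [hw1]; linarith [hw1 i, hw1 j])
        (by
          rw [← hF, Nat.cast_add_one] at hsumσ
          simp only [Fintype.sum_option, Option.elim]
          linarith)
        rfl
      exact ⟨_, hq.split he hcs hcs' hpair⟩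

theorem sinr_requirements_achievable_general (K τ : ℕ) (hK : 0 < K)
    (γ : Fin K → ℝ) (hγ : ∀ k, 0 < γ k)
    (z : Fin K → ℝ) (hzdef : ∀ k, z k = γ k / (1 + γ k))
    (B : ℝ) (hBdef : B = (∑ j : Fin K, z j) / (τ : ℝ))
    (hload : ∑ k : Fin K, z k ≤ (τ : ℝ))
    (hzB : ∀ k, z k < B) :
    ∃ q : Fin K → EuclideanSpace ℝ (Fin τ),
      (∀ k, ‖q k‖ = 1) ∧
      ∀ k, z k < (∑ j : Fin K, z j * (inner ℝ (q k) (q j) : ℝ) ^ 2) ∧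
        γ k ≤ z k / ((∑ j : Fin K, z j * (inner ℝ (q k) (q j) : ℝ) ^ 2) - z k) := by
  have hz0 (k) : 0 < z k := by rw [hzdef]; have := hγ k; positivity
  have hzγ (k) : z k = γ k * (1 - z k) := by
    have := (add_pos one_pos (hγ k)).ne'
    rw [hzdef]; field_simp; ring
  have hB0 : 0 < B := (hz0 ⟨0, hK⟩).trans (hzB _)
  have hB1 : B ≤ 1 := hBdef ▸ div_le_one_of_le₀ hload τ.cast_nonneg
  have hsum_ne : ∑ j, z j ≠ 0 := fun h => hB0.ne' (by rw [hBdef, h, zero_div])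
  obtain ⟨q, hq⟩ := exists_isWeightedParsevalFrame (E := EuclideanSpace ℝ (Fin τ))
    (fun k => z k / B) (fun k => div_pos (hz0 k) hB0)
    (fun k => div_le_one_of_le₀ (hzB k).le hB0.le)
    (by rw [← sum_div, finrank_euclideanSpace_fin, hBdef, div_div_cancel₀ hsum_ne])
  have hs (k) : ∑ j, z j * ⟪q k, q j⟫ ^ 2 = B := by
    have := hq.sum_mul_inner_sq (q k)
    rw [hq.norm_eq_one, one_pow] at this
    calc ∑ j, z j * ⟪q k, q j⟫ ^ 2 = B * ∑ j, z j / B * ⟪q j, q k⟫ ^ 2 := by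
          rw [mul_sum]; congr! 1 with j; rw [real_inner_comm]; field_simp
      _ = B := by rw [this, mul_one]
  refine ⟨q, hq.norm_eq_one, fun k => ⟨(hs k).symm ▸ hzB k, ?_⟩⟩
  rw [hs, le_div_iff₀ (sub_pos.2 (hzB k))]
  calc γ k * (B - z k) ≤ γ k * (1 - z k) := by gcongr; exact (hγ k).le
    _ = z k := (hzγ k).symm

/-- **Main achievability claim.** If the SINR requirements `γ k > 0` lie within the load
region `∑ k γ k/(1 + γ k) ≤ τ` and satisfy the majorization condition
`z k < B = (∑ j z j)/τ` where `z k = γ k/(1 + γ k)`, then there exist unit-norm pilot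
sequences `q 1, …, q K ∈ ℝ^τ` such that the asymptotic SINR lower bound
`z k/(s k − z k)` with `s k = ∑ j z j ⟪q k, q j⟫²` meets every SINR requirement. -/
theorem sinr_requirements_achievable (K τ : ℕ) (hK : 0 < K) (hτ : 0 < τ) (hτK : τ ≤ K)
    (γ : Fin K → ℝ) (hγ : ∀ k, 0 < γ k)
    (z : Fin K → ℝ) (hzdef : ∀ k, z k = γ k / (1 + γ k))
    (B : ℝ) (hBdef : B = (∑ j : Fin K, z j) / (τ : ℝ))
    (hload : ∑ k : Fin K, z k ≤ (τ : ℝ))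
    (hzB : ∀ k, z k < B) :
    ∃ q : Fin K → EuclideanSpace ℝ (Fin τ),
      (∀ k, ‖q k‖ = 1) ∧
      ∀ k, z k < (∑ j : Fin K, z j * (inner ℝ (q k) (q j) : ℝ) ^ 2) ∧
        γ k ≤ z k / ((∑ j : Fin K, z j * (inner ℝ (q k) (q j) : ℝ) ^ 2) - z k) :=
  sinr_requirements_achievable_general K τ hK γ hγ z hzdef B hBdef hload hzB
end
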